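/- arXiv:2603.27489 — 2 statements merged into one kernel-verified Lean document; each statement's English description precedes it below -/
import Mathlib

section
/- For every integer n ≥ 5 and every real p > 1, λ_{1,p}(T_{n,4}) > λ_{1,p}(T_{n,3}). -/
attribute [local instance] Classical.propDecidable

open Finset

/-- The degree of a vertex `x` in a finite simple graph `G`. -/
noncomputable def deg {V : Type*} [Fintype V] (G : SimpleGraph V) (x : V) : ℕ :=
  (Finset.univ.filter (fun y => G.Adj x y)).card

/-- The `p`-energy `‖df‖_{p,G}^p = Σ_{{x,y} ∈ E(G)} |f x - f y|^p`
(each unordered edge counted once, i.e. half the double sum). -/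
noncomputable def energy {V : Type*} [Fintype V] (G : SimpleGraph V) (p : ℝ) (f : V → ℝ) : ℝ :=
  (∑ x : V, ∑ y : V, if G.Adj x y then |f x - f y| ^ p else 0) / 2

/-- The weighted `p`-norm `‖f‖_{p,G}^p = Σ_x |f x|^p · deg x`. -/
noncomputable def pnorm {V : Type*} [Fintype V] (G : SimpleGraph V) (p : ℝ) (f : V → ℝ) : ℝ :=
  ∑ x : V, |f x| ^ p * (deg G x : ℝ)

/-- The `p`-Rayleigh quotient `R_{p,G}[f]`. -/
noncomputable def rayleigh {V : Type*} [Fintype V] (G : SimpleGraph V) (p : ℝ) (f : V → ℝ) : ℝ :=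
  energy G p f / pnorm G p f

/-- The first `p`-Dirichlet eigenvalue `λ_{1,p}(G)`: the infimum of Rayleigh quotients of
nonzero functions vanishing on the boundary `B(G)` (the set of pendant vertices). -/
noncomputable def lambda1 {V : Type*} [Fintype V] (G : SimpleGraph V) (p : ℝ) : ℝ :=
  sInf { r : ℝ | ∃ f : V → ℝ, (∀ x : V, deg G x = 1 → f x = 0) ∧ f ≠ 0 ∧ r = rayleigh G p f }

/-- The number of edges with exactly one endpoint in `U`. -/
noncomputable def cutCard {V : Type*} [Fintype V] (G : SimpleGraph V) (U : Finset V) : ℕ :=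
  ∑ x ∈ U, (Finset.univ.filter (fun y => G.Adj x y ∧ y ∉ U)).card

/-- The Dirichlet Cheeger constant `h_D(G)`. -/
noncomputable def cheeger {V : Type*} [Fintype V] (G : SimpleGraph V) : ℝ :=
  sInf { r : ℝ | ∃ U : Finset V, U.Nonempty ∧ (∀ x ∈ U, deg G x ≠ 1) ∧
    r = (cutCard G U : ℝ) / ∑ x ∈ U, (deg G x : ℝ) }

/-- The tadpole graph `T_{n,i}` on vertices `0, …, n-1` (vertex `k-1` representing `t_k`):
edges between consecutive vertices together with the edge `t_1 ∼ t_i`. -/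
def tadpole (n i : ℕ) : SimpleGraph (Fin n) :=
  SimpleGraph.fromRel (fun a b => b.val = a.val + 1 ∨ (a.val = 0 ∧ b.val = i - 1))

/-- The path graph on `n` vertices. -/
def pathG (n : ℕ) : SimpleGraph (Fin n) :=
  SimpleGraph.fromRel (fun a b => b.val = a.val + 1)

/-!
Take a minimiser `f` for `T_{n,4}`. Replacing `f` by `|f|`, and then by the pointwise maximum or
minimum of `|f|` and its reflection under the automorphism swapping `t_1` and `t_3`, gives a
nonnegative test function `w` with `w t_1 = w t_3` and Rayleigh quotient at most `λ_{1,p}(T_{n,4})`: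
by convexity of `|·|^p` the maximum and the minimum together have no more energy and the same norm.
Taking suffix maxima along the path `t_2, t_3, …, t_n` makes `w` nonincreasing from `t_2` on without
increasing its energy or decreasing its norm, and minimality forces `w t_2 > w t_3`, since otherwise
raising `w` at `t_2` would lower the quotient. Finally `(w t_2, w t_2, w t_3, w t_4, …)` is a test
function on `T_{n,3}` whose energy is smaller by `|w t_3 - w t_4|^p` and whose norm is larger by
`2 (w t_2)^p - (w t_3)^p - (w t_4)^p > 0`.
-/

theorem convexOn_abs_rpow {p : ℝ} (hp : 1 ≤ p) : ConvexOn ℝ Set.univ fun x : ℝ => |x| ^ p := by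
  refine ⟨convex_univ, fun x _ y _ a b ha hb hab => ?_⟩
  calc |a • x + b • y| ^ p ≤ (a • |x| + b • |y|) ^ p := by
        gcongr
        simpa [abs_mul, abs_of_nonneg ha, abs_of_nonneg hb] using abs_add_le (a * x) (b * y)
    _ ≤ a • |x| ^ p + b • |y| ^ p :=
        (convexOn_rpow hp).2 (abs_nonneg x) (abs_nonneg y) ha hb hab

theorem ConvexOn.map_add_map_reflect_le {φ : ℝ → ℝ} (hφ : ConvexOn ℝ Set.univ φ) {s t x : ℝ}
    (htx : t ≤ x) (hxs : x ≤ s) : φ x + φ (s + t - x) ≤ φ s + φ t := by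
  rcases (htx.trans hxs).eq_or_lt with rfl | hts
  · obtain rfl : x = t := le_antisymm hxs htx
    simp
  set θ := (s - x) / (s - t)
  have hθ₀ : 0 ≤ θ := div_nonneg (by linarith) (by linarith)
  have hθ₁ : 0 ≤ 1 - θ := by rw [sub_nonneg, div_le_one (by linarith)]; linarith
  have hx : θ • t + (1 - θ) • s = x := by simp only [θ, smul_eq_mul]; field_simp; ring
  have hy : θ • s + (1 - θ) • t = s + t - x := by simp only [θ, smul_eq_mul]; field_simp; ring
  have h₁ := hφ.2 (Set.mem_univ t) (Set.mem_univ s) hθ₀ hθ₁ (by ring)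
  have h₂ := hφ.2 (Set.mem_univ s) (Set.mem_univ t) hθ₀ hθ₁ (by ring)
  rw [hx] at h₁
  rw [hy] at h₂
  simp only [smul_eq_mul] at h₁ h₂
  linarith

theorem ConvexOn.map_max_sub_max_add_map_min_sub_min_le {φ : ℝ → ℝ} (hφ : ConvexOn ℝ Set.univ φ)
    (a a' b b' : ℝ) :
    φ (max a a' - max b b') + φ (min a a' - min b b') ≤ φ (a - b) + φ (a' - b') := by
  rcases le_total a' a with ha | ha <;> rcases le_total b' b with hb | hb
  · simp [ha, hb]
  · have := hφ.map_add_map_reflect_le (s := a - b) (t := a' - b') (x := a - b')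
      (by linarith) (by linarith)
    simp only [max_eq_left ha, max_eq_right hb, min_eq_right ha, min_eq_left hb]
    convert this using 3; ring
  · have := hφ.map_add_map_reflect_le (s := a' - b') (t := a - b) (x := a' - b)
      (by linarith) (by linarith)
    simp only [max_eq_right ha, max_eq_left hb, min_eq_left ha, min_eq_right hb]
    rw [add_comm (φ (a - b))]
    convert this using 3; ring
  · simp [ha, hb, add_comm]

theorem rpow_sub_one_mul_le_add_rpow_sub_rpow {b ε p : ℝ} (hb : 0 ≤ b) (hε : 0 ≤ ε)
    (hp : 1 ≤ p) : b ^ (p - 1) * ε ≤ (b + ε) ^ p - b ^ p := by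
  have hsplit : ∀ x : ℝ, 0 ≤ x → x ^ p = x ^ (p - 1) * x := fun x hx => by
    conv_lhs => rw [← sub_add_cancel p 1]
    rw [Real.rpow_add' hx (by linarith), Real.rpow_one]
  have hmono : b ^ (p - 1) ≤ (b + ε) ^ (p - 1) :=
    Real.rpow_le_rpow hb (by linarith) (by linarith)
  rw [hsplit b hb, hsplit (b + ε) (by linarith)]
  nlinarith [Real.rpow_nonneg hb (p - 1)]

section Graph

variable {V : Type*} [Fintype V] {G : SimpleGraph V} {p : ℝ}

theorem energy_nonneg (f : V → ℝ) : 0 ≤ energy G p f := by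
  unfold energy; positivity

theorem pnorm_nonneg (f : V → ℝ) : 0 ≤ pnorm G p f := by
  unfold pnorm; positivity

theorem lambda1_le_rayleigh {f : V → ℝ} (hf : ∀ x, deg G x = 1 → f x = 0) (hne : f ≠ 0) :
    lambda1 G p ≤ rayleigh G p f :=
  csInf_le ⟨0, by rintro _ ⟨g, -, -, rfl⟩; exact div_nonneg (energy_nonneg g) (pnorm_nonneg g)⟩
    ⟨f, hf, hne, rfl⟩

theorem deg_eq_sum_ite (x : V) : (deg G x : ℝ) = ∑ y, if G.Adj x y then 1 else 0 := by
  rw [deg, card_filter]; push_cast; rfl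

theorem two_mul_pnorm_eq_sum_adj (f : V → ℝ) :
    2 * pnorm G p f = ∑ x, ∑ y, if G.Adj x y then |f x| ^ p + |f y| ^ p else 0 := by
  have h : ∀ g : V → ℝ, ∑ x, ∑ y, (if G.Adj x y then g x else 0) = ∑ x, g x * deg G x := by
    intro g
    simp_rw [deg_eq_sum_ite, mul_sum, mul_ite, mul_one, mul_zero]
  have hswap : ∑ x, ∑ y, (if G.Adj x y then |f y| ^ p else 0)
      = ∑ x, ∑ y, (if G.Adj x y then |f x| ^ p else 0) := by
    rw [sum_comm]
    exact sum_congr rfl fun x _ => sum_congr rfl fun y _ => by rw [G.adj_comm]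
  simp_rw [ite_add_zero, sum_add_distrib, hswap, h, pnorm]
  ring

theorem deg_apply_iso (σ : G ≃g G) (x : V) : deg G (σ x) = deg G x := by
  have h : (deg G x : ℝ) = deg G (σ x) := by
    rw [deg_eq_sum_ite, deg_eq_sum_ite]
    exact Fintype.sum_equiv σ.toEquiv _ _ fun y => if_congr σ.map_adj_iff.symm rfl rfl
  exact_mod_cast h.symm

theorem energy_abs_le (hp : 0 ≤ p) (f : V → ℝ) : energy G p |f| ≤ energy G p f := by
  unfold energy
  gcongr with x _ y _
  split_ifs
  · exact Real.rpow_le_rpow (abs_nonneg _) (abs_abs_sub_abs_le_abs_sub _ _) hp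
  · rfl

theorem pnorm_abs (f : V → ℝ) : pnorm G p |f| = pnorm G p f := by
  simp [pnorm]

theorem pnorm_le_pnorm (hp : 0 ≤ p) {f g : V → ℝ} (h : ∀ x, |f x| ≤ |g x|) :
    pnorm G p f ≤ pnorm G p g := by
  unfold pnorm
  gcongr ∑ x, ?_ ^ p * _ with x
  exact h x

theorem energy_sup_add_energy_inf_le (hp : 1 ≤ p) (f g : V → ℝ) :
    energy G p (f ⊔ g) + energy G p (f ⊓ g) ≤ energy G p f + energy G p g := by
  simp only [energy, ← add_div, ← sum_add_distrib, ite_add_ite, add_zero]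
  gcongr with x _ y _
  split_ifs
  · exact (convexOn_abs_rpow hp).map_max_sub_max_add_map_min_sub_min_le _ _ _ _
  · rfl

theorem pnorm_sup_add_pnorm_inf (f g : V → ℝ) :
    pnorm G p (f ⊔ g) + pnorm G p (f ⊓ g) = pnorm G p f + pnorm G p g := by
  simp only [pnorm, ← sum_add_distrib, ← add_mul]
  refine sum_congr rfl fun x _ => ?_
  rcases le_total (f x) (g x) with h | h <;> simp [h, add_comm]

theorem energy_comp_iso (σ : G ≃g G) (f : V → ℝ) : energy G p (f ∘ σ) = energy G p f := by
  unfold energy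
  congr 1
  refine Fintype.sum_equiv σ.toEquiv _ _ fun x => Fintype.sum_equiv σ.toEquiv _ _ fun y => ?_
  exact if_congr σ.map_adj_iff.symm rfl rfl

theorem pnorm_comp_iso (σ : G ≃g G) (f : V → ℝ) : pnorm G p (f ∘ σ) = pnorm G p f := by
  unfold pnorm
  exact Fintype.sum_equiv σ.toEquiv _ _ fun x => by simp [deg_apply_iso]

theorem exists_nonneg_invariant_energy_le (σ : G ≃g G) (hσ : Function.Involutive σ)
    (hp : 1 ≤ p) {c : ℝ} {f : V → ℝ} (hf : ∀ x, deg G x = 1 → f x = 0)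
    (hpos : 0 < pnorm G p f) (hle : energy G p f ≤ c * pnorm G p f) :
    ∃ g : V → ℝ, (∀ x, deg G x = 1 → g x = 0) ∧ 0 ≤ g ∧ g ∘ σ = g ∧
      0 < pnorm G p g ∧ energy G p g ≤ c * pnorm G p g := by
  set a := |f| with ha_def
  have ha : 0 ≤ a := fun x => abs_nonneg (f x)
  have hbdry : ∀ x, deg G x = 1 → a x = 0 ∧ a (σ x) = 0 := fun x hx =>
    ⟨by simp [a, hf x hx], by simp [a, hf (σ x) ((deg_apply_iso σ x).trans hx)]⟩
  have hpos' : 0 < pnorm G p a := by rwa [ha_def, pnorm_abs]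
  have hsum : energy G p (a ⊔ a ∘ σ) + energy G p (a ⊓ a ∘ σ)
      ≤ c * (pnorm G p (a ⊔ a ∘ σ) + pnorm G p (a ⊓ a ∘ σ)) := by
    have hEa : energy G p a ≤ c * pnorm G p a := by
      rw [ha_def, pnorm_abs]; exact (energy_abs_le (by linarith) f).trans hle
    have := energy_sup_add_energy_inf_le (G := G) hp a (a ∘ σ)
    rw [energy_comp_iso] at this
    rw [pnorm_sup_add_pnorm_inf, pnorm_comp_iso]
    linarith
  have hsup_pos : 0 < pnorm G p (a ⊔ a ∘ σ) := by
    refine hpos'.trans_le (pnorm_le_pnorm (by linarith) fun x => ?_)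
    rw [abs_of_nonneg (ha x)]
    exact (le_sup_left (a := a) (b := a ∘ σ) x).trans (le_abs_self _)
  by_cases hinf : 0 < pnorm G p (a ⊓ a ∘ σ) ∧ energy G p (a ⊓ a ∘ σ) ≤ c * pnorm G p (a ⊓ a ∘ σ)
  · refine ⟨a ⊓ a ∘ σ, fun x hx => ?_, le_inf ha fun x => ha (σ x), ?_, hinf⟩
    · simp [(hbdry x hx).1, (hbdry x hx).2]
    · ext x; simp [hσ x, min_comm]
  · refine ⟨a ⊔ a ∘ σ, fun x hx => ?_, le_sup_of_le_left ha, ?_, hsup_pos, ?_⟩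
    · simp [(hbdry x hx).1, (hbdry x hx).2]
    · ext x; simp [hσ x, max_comm]
    · rw [not_and_or, not_lt, not_le] at hinf
      rcases hinf with h | h
      · rw [le_antisymm h (pnorm_nonneg _), add_zero] at hsum
        linarith [energy_nonneg (G := G) (p := p) (a ⊓ a ∘ σ)]
      · linarith

theorem pnorm_smul {s : ℝ} (hs : 0 ≤ s) (f : V → ℝ) :
    pnorm G p (s • f) = s ^ p * pnorm G p f := by
  simp only [pnorm, mul_sum, Pi.smul_apply, smul_eq_mul, abs_mul, abs_of_nonneg hs,
    Real.mul_rpow hs (abs_nonneg _), mul_assoc]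

theorem energy_smul {s : ℝ} (hs : 0 ≤ s) (f : V → ℝ) :
    energy G p (s • f) = s ^ p * energy G p f := by
  simp only [energy, mul_div_assoc', mul_sum, mul_ite, mul_zero, Pi.smul_apply, smul_eq_mul,
    ← mul_sub, abs_mul, abs_of_nonneg hs, Real.mul_rpow hs (abs_nonneg _)]

theorem rayleigh_smul {s : ℝ} (hs : 0 < s) (f : V → ℝ) :
    rayleigh G p (s • f) = rayleigh G p f := by
  rw [rayleigh, rayleigh, energy_smul hs.le, pnorm_smul hs.le,
    mul_div_mul_left _ _ (Real.rpow_pos_of_pos hs p).ne']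

theorem continuous_pnorm (hp : 0 ≤ p) : Continuous (pnorm G p) :=
  continuous_finsetSum _ fun x _ =>
    ((continuous_apply x).abs.rpow_const fun _ => Or.inr hp).mul continuous_const

theorem continuous_energy (hp : 0 ≤ p) : Continuous (energy G p) := by
  refine (continuous_finsetSum _ fun x _ => continuous_finsetSum _ fun y _ => ?_).div_const 2
  exact continuous_if_const _
    (fun _ => ((continuous_apply x).sub (continuous_apply y)).abs.rpow_const fun _ => Or.inr hp)
    fun _ => continuous_const

theorem pnorm_pos (hdeg : ∀ x, deg G x ≠ 0) {f : V → ℝ} (hf : f ≠ 0) : 0 < pnorm G p f := by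
  obtain ⟨x, hx⟩ := Function.ne_iff.1 hf
  refine sum_pos' (fun y _ => by positivity) ⟨x, mem_univ x, ?_⟩
  have : (0 : ℝ) < deg G x := Nat.cast_pos.2 (Nat.pos_of_ne_zero (hdeg x))
  have : 0 < |f x| := abs_pos.2 hx
  positivity

theorem abs_le_one_of_pnorm_eq_one (hdeg : ∀ x, deg G x ≠ 0) (hp : 0 < p) {f : V → ℝ}
    (hf : pnorm G p f = 1) (x : V) : |f x| ≤ 1 := by
  by_contra! h
  have h1 : 1 < |f x| ^ p := Real.one_lt_rpow h hp
  have h2 : |f x| ^ p * deg G x ≤ pnorm G p f :=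
    single_le_sum (f := fun y => |f y| ^ p * (deg G y : ℝ)) (fun y _ => by positivity) (mem_univ x)
  have h3 : (1 : ℝ) ≤ deg G x := Nat.one_le_cast.2 (Nat.pos_of_ne_zero (hdeg x))
  nlinarith

theorem exists_pnorm_eq_one_energy_eq_lambda1 (hdeg : ∀ x, deg G x ≠ 0)
    (hint : ∃ x, deg G x ≠ 1) (hp : 0 < p) :
    ∃ f : V → ℝ, (∀ x, deg G x = 1 → f x = 0) ∧ pnorm G p f = 1 ∧ energy G p f = lambda1 G p := by
  set K := {f : V → ℝ | (∀ x, deg G x = 1 → f x = 0) ∧ pnorm G p f = 1}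
  have normalize : ∀ f : V → ℝ, (∀ x, deg G x = 1 → f x = 0) → f ≠ 0 →
      ∃ g ∈ K, rayleigh G p g = rayleigh G p f := by
    intro f hf hne
    have hN : 0 < pnorm G p f := pnorm_pos hdeg hne
    set s := pnorm G p f ^ (-p⁻¹)
    have hs : 0 < s := Real.rpow_pos_of_pos hN _
    refine ⟨s • f, ⟨fun x hx => by simp [hf x hx], ?_⟩, rayleigh_smul hs f⟩
    rw [pnorm_smul hs.le, ← Real.rpow_mul hN.le, neg_mul, inv_mul_cancel₀ hp.ne',
      Real.rpow_neg_one, inv_mul_cancel₀ hN.ne']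
  have hK : IsCompact K := by
    refine (isCompact_closedBall (0 : V → ℝ) 1).of_isClosed_subset ?_ fun f hf => ?_
    · have hB : {f : V → ℝ | ∀ x, deg G x = 1 → f x = 0}
          = ⋂ x ∈ {x | deg G x = 1}, {f | f x = 0} := by
        ext; simp
      refine IsClosed.inter (s₁ := {f | ∀ x, deg G x = 1 → f x = 0}) ?_
        (isClosed_eq (continuous_pnorm hp.le) continuous_const)
      rw [hB]
      exact isClosed_biInter fun x _ => isClosed_eq (continuous_apply x) continuous_const
    · rw [mem_closedBall_zero_iff, pi_norm_le_iff_of_nonneg zero_le_one]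
      exact abs_le_one_of_pnorm_eq_one hdeg hp hf.2
  have hKne : K.Nonempty := by
    obtain ⟨x₀, hx₀⟩ := hint
    obtain ⟨g, hg, -⟩ := normalize (Pi.single x₀ 1)
      (fun x hx => Pi.single_eq_of_ne (by rintro rfl; exact hx₀ hx) _)
      (by simp)
    exact ⟨g, hg⟩
  have hcont : ContinuousOn (rayleigh G p) K :=
    (continuous_energy hp.le).continuousOn.div (continuous_pnorm hp.le).continuousOn
      fun f hf => by rw [hf.2]; exact one_ne_zero
  obtain ⟨f, hfK, hmin⟩ := hK.exists_isMinOn hKne hcont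
  have hne : f ≠ 0 := by
    rintro rfl
    simp [K, pnorm, Real.zero_rpow hp.ne'] at hfK
  refine ⟨f, hfK.1, hfK.2, ?_⟩
  have hr : rayleigh G p f = energy G p f := by rw [rayleigh, hfK.2, div_one]
  refine hr ▸ le_antisymm (le_csInf ⟨_, f, hfK.1, hne, rfl⟩ ?_) (lambda1_le_rayleigh hfK.1 hne)
  rintro _ ⟨g, hg, hgne, rfl⟩
  obtain ⟨g', hg'K, hg'⟩ := normalize g hg hgne
  exact hg' ▸ hmin hg'K

end Graph

section Tadpole

variable {n c : ℕ} {p : ℝ}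

theorem tadpole_adj_iff (hc : c ≠ 0) {x y : Fin n} :
    (tadpole n (c + 1)).Adj x y ↔
      y.val = x.val + 1 ∨ x.val = y.val + 1 ∨ (x.val = 0 ∧ y.val = c) ∨
        (y.val = 0 ∧ x.val = c) := by
  simp only [tadpole, SimpleGraph.fromRel_adj, ne_eq, Fin.ext_iff, Nat.add_sub_cancel]
  omega

theorem sum_fin_sum_fin (m : ℕ) (F : ℕ → ℕ → ℝ) :
    ∑ x : Fin m, ∑ y : Fin m, F x y = ∑ a ∈ range m, ∑ b ∈ range m, F a b := by
  simp only [Fin.sum_univ_eq_sum_range (F _) m]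
  exact Fin.sum_univ_eq_sum_range (fun a => ∑ b ∈ range m, F a b) m

theorem sum_sum_ite_tadpole_adj (hc : 2 ≤ c) (hcn : c < n) (φ : ℝ → ℝ → ℝ)
    (hφ : ∀ a b, φ a b = φ b a) (v : ℕ → ℝ) :
    ∑ x : Fin (n + 1), ∑ y : Fin (n + 1),
        (if (tadpole (n + 1) (c + 1)).Adj x y then φ (v x) (v y) else 0)
      = 2 * (∑ k ∈ range n, φ (v k) (v (k + 1)) + φ (v 0) (v c)) := by
  have hsplit : ∀ a b : ℕ, (if b = a + 1 ∨ a = b + 1 ∨ (a = 0 ∧ b = c) ∨ (b = 0 ∧ a = c)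
      then φ (v a) (v b) else 0) = (if b = a + 1 then φ (v a) (v b) else 0)
        + (if a = b + 1 then φ (v b) (v a) else 0)
        + (if a = 0 ∧ b = c then φ (v 0) (v c) else 0)
        + (if b = 0 ∧ a = c then φ (v 0) (v c) else 0) := by
    intro a b
    split_ifs <;> first | omega | simp_all
  simp_rw [tadpole_adj_iff (by omega : c ≠ 0)]
  rw [sum_fin_sum_fin (n + 1) fun a b =>
    if b = a + 1 ∨ a = b + 1 ∨ (a = 0 ∧ b = c) ∨ (b = 0 ∧ a = c) then φ (v a) (v b) else 0]
  simp only [hsplit, sum_add_distrib]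
  rw [sum_comm (f := fun a b => if a = b + 1 then φ (v b) (v a) else 0)]
  simp only [ite_and, sum_ite_eq', sum_ite_irrel, sum_const_zero, mem_range, sum_range_succ,
    Order.lt_add_one_iff, Order.add_one_le_iff, lt_self_iff_false, ↓reduceIte, add_zero,
    lt_add_iff_pos_left, zero_le]
  rw [if_pos hcn.le, sum_congr rfl fun k hk => if_pos (mem_range.1 hk)]
  ring

theorem one_lt_deg_tadpole (hc : 2 ≤ c) (hcn : c < n) {x : Fin (n + 1)} (hx : x.val < n) :
    1 < deg (tadpole (n + 1) (c + 1)) x := by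
  rw [deg, one_lt_card]
  refine ⟨⟨x + 1, by omega⟩, ?_, ⟨if x.val = 0 then c else x - 1, by split_ifs <;> omega⟩, ?_, ?_⟩
  all_goals simp only [mem_filter, mem_univ, true_and, tadpole_adj_iff (by omega : c ≠ 0),
    ne_eq, Fin.ext_iff]
  all_goals (try split_ifs) <;> first | omega | simp

theorem deg_tadpole_last (hc : 2 ≤ c) (hcn : c < n) :
    deg (tadpole (n + 1) (c + 1)) (Fin.last n) = 1 := by
  rw [deg, card_eq_one]
  refine ⟨⟨n - 1, by omega⟩, ?_⟩
  ext y
  simp only [mem_filter, mem_univ, true_and, tadpole_adj_iff (by omega : c ≠ 0), mem_singleton,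
    Fin.ext_iff, Fin.val_last]
  omega

theorem deg_tadpole_eq_one_iff (hc : 2 ≤ c) (hcn : c < n) (x : Fin (n + 1)) :
    deg (tadpole (n + 1) (c + 1)) x = 1 ↔ x.val = n := by
  refine ⟨fun h => ?_, fun h => ?_⟩
  · by_contra hx
    have := one_lt_deg_tadpole hc hcn (by omega : x.val < n)
    omega
  · obtain rfl : x = Fin.last n := Fin.ext h
    exact deg_tadpole_last hc hcn

theorem deg_tadpole_ne_zero (hc : 2 ≤ c) (hcn : c < n) (x : Fin (n + 1)) :
    deg (tadpole (n + 1) (c + 1)) x ≠ 0 := by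
  rcases (Nat.lt_succ_iff.1 x.isLt).lt_or_eq with hx | hx
  · have := one_lt_deg_tadpole hc hcn hx
    omega
  · rw [(deg_tadpole_eq_one_iff hc hcn x).2 hx]
    exact one_ne_zero

/- Path coordinates on `T_{n+1,c+1}`: `v k` is the value at `t_{k+1}`, so `v n` sits at the pendant
vertex and the chord joins `v 0` and `v c`; values at indices above `n` play no role. -/
noncomputable def tadEnergy (c n : ℕ) (p : ℝ) (v : ℕ → ℝ) : ℝ :=
  ∑ k ∈ range n, |v k - v (k + 1)| ^ p + |v 0 - v c| ^ p

noncomputable def tadNorm (c n : ℕ) (p : ℝ) (v : ℕ → ℝ) : ℝ :=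
  ∑ k ∈ range n, (|v k| ^ p + |v (k + 1)| ^ p) + (|v 0| ^ p + |v c| ^ p)

theorem energy_tadpole (hc : 2 ≤ c) (hcn : c < n) (v : ℕ → ℝ) :
    energy (tadpole (n + 1) (c + 1)) p (fun x => v x) = tadEnergy c n p v := by
  rw [energy, sum_sum_ite_tadpole_adj hc hcn (fun a b => |a - b| ^ p)
    (fun a b => by rw [abs_sub_comm]) v, tadEnergy]
  ring

theorem pnorm_tadpole (hc : 2 ≤ c) (hcn : c < n) (v : ℕ → ℝ) :
    pnorm (tadpole (n + 1) (c + 1)) p (fun x => v x) = tadNorm c n p v := by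
  have := (two_mul_pnorm_eq_sum_adj (fun x : Fin (n + 1) => v x)).trans
    (sum_sum_ite_tadpole_adj hc hcn (fun a b => |a| ^ p + |b| ^ p) (fun a b => add_comm _ _) v)
  rw [tadNorm]
  linarith

theorem lambda1_mul_tadNorm_le (hp : p ≠ 0) (hc : 2 ≤ c) (hcn : c < n) {v : ℕ → ℝ}
    (hv : v n = 0) (hN : 0 < tadNorm c n p v) :
    lambda1 (tadpole (n + 1) (c + 1)) p * tadNorm c n p v ≤ tadEnergy c n p v := by
  have hf : ∀ x, deg (tadpole (n + 1) (c + 1)) x = 1 → v x = 0 := fun x hx => by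
    rw [(deg_tadpole_eq_one_iff hc hcn x).1 hx, hv]
  have hne : (fun x : Fin (n + 1) => v x) ≠ 0 := by
    intro h
    rw [← pnorm_tadpole hc hcn, h] at hN
    simp [pnorm, Real.zero_rpow hp] at hN
  have := lambda1_le_rayleigh (p := p) hf hne
  rwa [rayleigh, energy_tadpole hc hcn, pnorm_tadpole hc hcn, le_div_iff₀ hN] at this

def tadpoleSwap (hn : 2 ≤ n) : tadpole (n + 1) (3 + 1) ≃g tadpole (n + 1) (3 + 1) where
  toEquiv := Equiv.swap ⟨0, by omega⟩ ⟨2, by omega⟩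
  map_rel_iff' {x y} := by
    rw [tadpole_adj_iff (c := 3) three_ne_zero, tadpole_adj_iff (c := 3) three_ne_zero]
    simp only [Equiv.swap_apply_def]
    split_ifs <;> simp only [Fin.ext_iff, true_and, false_and, and_false, false_or, or_false,
      false_iff] at * <;> omega

theorem exists_symmetric_tadpole_four (hp : 1 < p) (hn : 3 < n) :
    ∃ w : ℕ → ℝ, 0 ≤ w ∧ w 0 = w 2 ∧ w n = 0 ∧ 0 < tadNorm 3 n p w ∧
      tadEnergy 3 n p w ≤ lambda1 (tadpole (n + 1) (3 + 1)) p * tadNorm 3 n p w := by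
  obtain ⟨f, hf, hf1, hfE⟩ := exists_pnorm_eq_one_energy_eq_lambda1
    (deg_tadpole_ne_zero (by norm_num) hn)
    ⟨0, by rw [Ne, deg_tadpole_eq_one_iff (by norm_num) hn, Fin.val_zero]; omega⟩ (by positivity)
  obtain ⟨t, ht, ht0, htσ, htpos, htE⟩ := exists_nonneg_invariant_energy_le
    (tadpoleSwap (by omega)) (Equiv.swap_apply_self _ _) hp.le hf (by rw [hf1]; norm_num)
    (by rw [hfE, hf1, mul_one])
  set w : ℕ → ℝ := fun k => if h : k < n + 1 then t ⟨k, h⟩ else 0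
  have htw : t = fun x : Fin (n + 1) => w x := funext fun x => by simp only [w, dif_pos x.isLt]
  rw [htw, pnorm_tadpole (by norm_num) hn] at htpos
  rw [htw, energy_tadpole (by norm_num) hn, pnorm_tadpole (by norm_num) hn] at htE
  refine ⟨w, fun k => ?_, ?_, ?_, htpos, htE⟩
  · simp only [w]
    split_ifs
    exacts [ht0 _, le_rfl]
  · simpa [w, tadpoleSwap, show 2 ≤ n by omega] using (congrFun htσ ⟨0, by omega⟩).symm
  · simpa [w] using ht ⟨n, by omega⟩ ((deg_tadpole_eq_one_iff (by norm_num) hn _).2 rfl)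

end Tadpole

section PathCoordinates

variable {c n m : ℕ} {p lam : ℝ} {w : ℕ → ℝ}

theorem tadNorm_le_tadNorm (hp : 0 ≤ p) {u v : ℕ → ℝ} (h : ∀ k, |u k| ≤ |v k|) :
    tadNorm c n p u ≤ tadNorm c n p v := by
  unfold tadNorm
  have hk : ∀ k, |u k| ^ p ≤ |v k| ^ p := fun k => Real.rpow_le_rpow (abs_nonneg _) (h k) hp
  exact add_le_add (sum_le_sum fun k _ => add_le_add (hk k) (hk _)) (add_le_add (hk 0) (hk c))

theorem tadNorm_eq_zero (hp : p ≠ 0) (hc : c ≤ n) {v : ℕ → ℝ} (hv : ∀ k ≤ n, v k = 0) :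
    tadNorm c n p v = 0 := by
  have hk : ∀ k ≤ n, |v k| ^ p = 0 := fun k hk => by rw [hv k hk, abs_zero, Real.zero_rpow hp]
  rw [tadNorm, sum_eq_zero fun k h => ?_, hk 0 (Nat.zero_le n), hk c hc]
  · ring
  · rw [hk k (mem_range.1 h).le, hk (k + 1) (mem_range.1 h)]
    ring

theorem tadEnergy_pos (hp : p ≠ 0) (hc : c ≤ n) {v : ℕ → ℝ} (hv : v n = 0)
    (hN : 0 < tadNorm c n p v) : 0 < tadEnergy c n p v := by
  by_contra! hE
  have hpath : ∑ k ∈ range n, |v k - v (k + 1)| ^ p = 0 := by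
    have : 0 ≤ |v 0 - v c| ^ p := by positivity
    have : 0 ≤ ∑ k ∈ range n, |v k - v (k + 1)| ^ p := by positivity
    rw [tadEnergy] at hE
    linarith
  have hstep : ∀ k < n, v k = v (k + 1) := fun k hk => by
    have := (sum_eq_zero_iff_of_nonneg fun _ _ => by positivity).1 hpath k (mem_range.2 hk)
    rw [Real.rpow_eq_zero (abs_nonneg _) hp, abs_eq_zero, sub_eq_zero] at this
    exact this
  have hzero : ∀ j ≤ n, v (n - j) = 0 := by
    intro j
    induction j with
    | zero => simpa using hv
    | succ j ih =>
      intro hj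
      rw [hstep (n - (j + 1)) (by omega), show n - (j + 1) + 1 = n - j by omega]
      exact ih (by omega)
  have := tadNorm_eq_zero hp hc fun k hk => by
    simpa [Nat.sub_sub_self hk] using hzero (n - k) (by omega)
  linarith

def suffixMax (w : ℕ → ℝ) : ℕ → ℕ → ℝ
  | 0, k => w k
  | j + 1, k => max (w k) (suffixMax w j (k + 1))

theorem le_suffixMax (w : ℕ → ℝ) (j k : ℕ) : w k ≤ suffixMax w j k := by
  cases j with
  | zero => exact le_rfl
  | succ j => exact le_max_left _ _

/- Suffix maxima `max (w k, …, w n)` along the path `1, …, n`; vertex `0`, the mirror image of `2`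
under the swap of `t_1` and `t_3`, copies the value at `2`. -/
noncomputable def rearrange (w : ℕ → ℝ) (n k : ℕ) : ℝ :=
  if k = 0 then suffixMax w (n - 2) 2 else suffixMax w (n - k) k

theorem rearrange_zero : rearrange w n 0 = rearrange w n 2 := rfl

theorem rearrange_of_lt {k : ℕ} (hk : k ≠ 0) (hkn : k < n) :
    rearrange w n k = max (w k) (rearrange w n (k + 1)) := by
  rw [rearrange, if_neg hk, rearrange, if_neg k.succ_ne_zero, show n - k = n - (k + 1) + 1 by omega]
  rfl

theorem rearrange_self (hn : n ≠ 0) : rearrange w n n = w n := by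
  rw [rearrange, if_neg hn, Nat.sub_self]
  rfl

theorem le_rearrange {k : ℕ} (hk : k ≠ 0) : w k ≤ rearrange w n k := by
  rw [rearrange, if_neg hk]
  exact le_suffixMax w _ k

theorem rearrange_nonneg (hw : 0 ≤ w) (k : ℕ) : 0 ≤ rearrange w n k := by
  rcases eq_or_ne k 0 with rfl | hk
  · exact (hw 2).trans (le_rearrange two_ne_zero)
  · exact (hw k).trans (le_rearrange hk)

theorem rearrange_succ_le {k : ℕ} (hk : k ≠ 0) (hkn : k < n) :
    rearrange w n (k + 1) ≤ rearrange w n k :=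
  (rearrange_of_lt hk hkn).symm ▸ le_max_right _ _

theorem rearrange_le_one (hn : 2 ≤ n) {k : ℕ} (hkn : k ≤ n) :
    rearrange w n k ≤ rearrange w n 1 := by
  have h : ∀ k, 1 ≤ k → k ≤ n → rearrange w n k ≤ rearrange w n 1 := by
    intro k hk
    induction k, hk using Nat.le_induction with
    | base => exact fun _ => le_rfl
    | succ k hk ih => exact fun hkn =>
        (rearrange_succ_le (by omega) (by omega)).trans (ih (by omega))
  rcases eq_or_ne k 0 with rfl | hk
  · exact h 2 (by omega) hn
  · exact h k (by omega) hkn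

theorem abs_rearrange_sub_le {k : ℕ} (hk : k ≠ 0) (hkn : k < n) :
    |rearrange w n k - rearrange w n (k + 1)| ≤ |w k - w (k + 1)| := by
  have := abs_max_sub_max_le_abs (w k) (w (k + 1)) (rearrange w n (k + 1))
  rwa [max_eq_right (le_rearrange k.succ_ne_zero), ← rearrange_of_lt hk hkn] at this

theorem tadEnergy_rearrange_le (hp : 0 ≤ p) (hn : 3 ≤ n) (hsymm : w 0 = w 2) :
    tadEnergy 3 n p (rearrange w n) ≤ tadEnergy 3 n p w := by
  have hedge : ∀ k < n, |rearrange w n k - rearrange w n (k + 1)| ≤ |w k - w (k + 1)| := by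
    intro k hkn
    rcases eq_or_ne k 0 with rfl | hk
    · rw [rearrange_zero, abs_sub_comm, hsymm, abs_sub_comm (w 2)]
      exact abs_rearrange_sub_le one_ne_zero (by omega)
    · exact abs_rearrange_sub_le hk hkn
  have hchord : |rearrange w n 0 - rearrange w n 3| ≤ |w 0 - w 3| := by
    rw [rearrange_zero, hsymm]
    exact abs_rearrange_sub_le two_ne_zero (by omega)
  exact add_le_add (sum_le_sum fun k hk => Real.rpow_le_rpow (abs_nonneg _)
    (hedge k (mem_range.1 hk)) hp) (Real.rpow_le_rpow (abs_nonneg _) hchord hp)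

theorem tadNorm_le_tadNorm_rearrange (hp : 0 ≤ p) (hw : 0 ≤ w) (hsymm : w 0 = w 2)
    (c : ℕ) : tadNorm c n p w ≤ tadNorm c n p (rearrange w n) := by
  refine tadNorm_le_tadNorm hp fun k => ?_
  rw [abs_of_nonneg (hw k), abs_of_nonneg (rearrange_nonneg hw k)]
  rcases eq_or_ne k 0 with rfl | hk
  · exact hsymm ▸ le_rearrange two_ne_zero
  · exact le_rearrange hk

theorem tadEnergy_three_add (c m : ℕ) (v : ℕ → ℝ) :
    tadEnergy c (3 + m) p v = |v 0 - v 1| ^ p + |v 1 - v 2| ^ p + |v 2 - v 3| ^ p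
      + |v 0 - v c| ^ p + ∑ k ∈ range m, |v (3 + k) - v (3 + k + 1)| ^ p := by
  rw [tadEnergy, sum_range_add]
  simp only [sum_range_succ, range_one, sum_singleton]
  ring

theorem tadNorm_three_add (c m : ℕ) (v : ℕ → ℝ) :
    tadNorm c (3 + m) p v = |v 0| ^ p + 2 * |v 1| ^ p + 2 * |v 2| ^ p + |v 3| ^ p
      + (|v 0| ^ p + |v c| ^ p) + ∑ k ∈ range m, (|v (3 + k)| ^ p + |v (3 + k + 1)| ^ p) := by
  rw [tadNorm, sum_range_add]
  simp only [sum_range_succ, range_one, sum_singleton]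
  ring

theorem tadEnergy_update_one (m : ℕ) (v : ℕ → ℝ) (b : ℝ) :
    tadEnergy 3 (3 + m) p (Function.update v 1 b) = tadEnergy 3 (3 + m) p v
      + (|v 0 - b| ^ p + |b - v 2| ^ p) - (|v 0 - v 1| ^ p + |v 1 - v 2| ^ p) := by
  simp only [tadEnergy_three_add, Function.update_apply, ↓reduceIte, zero_ne_one,
    OfNat.ofNat_ne_one, show ∀ k, 3 + k ≠ 1 by omega, show ∀ k, 3 + k + 1 ≠ 1 by omega]
  ring

theorem tadNorm_update_one (m : ℕ) (v : ℕ → ℝ) (b : ℝ) :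
    tadNorm 3 (3 + m) p (Function.update v 1 b) = tadNorm 3 (3 + m) p v
      + 2 * (|b| ^ p - |v 1| ^ p) := by
  simp only [tadNorm_three_add, Function.update_apply, ↓reduceIte, zero_ne_one,
    OfNat.ofNat_ne_one, show ∀ k, 3 + k ≠ 1 by omega, show ∀ k, 3 + k + 1 ≠ 1 by omega]
  ring

theorem tadEnergy_two_update_zero (hp : p ≠ 0) (m : ℕ) {v : ℕ → ℝ} (hv : v 0 = v 2) :
    tadEnergy 2 (3 + m) p (Function.update v 0 (v 1))
      = tadEnergy 3 (3 + m) p v - |v 2 - v 3| ^ p := by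
  simp only [tadEnergy_three_add, Function.update_apply, ↓reduceIte, one_ne_zero,
    OfNat.ofNat_ne_zero, show ∀ k, 3 + k ≠ 0 by omega, show ∀ k, 3 + k + 1 ≠ 0 by omega, hv,
    sub_self, abs_zero, Real.zero_rpow hp, abs_sub_comm (v 1)]
  ring

theorem tadNorm_two_update_zero (m : ℕ) {v : ℕ → ℝ} (hv : v 0 = v 2) :
    tadNorm 2 (3 + m) p (Function.update v 0 (v 1))
      = tadNorm 3 (3 + m) p v + 2 * |v 1| ^ p - |v 2| ^ p - |v 3| ^ p := by
  simp only [tadNorm_three_add, Function.update_apply, ↓reduceIte, one_ne_zero,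
    OfNat.ofNat_ne_zero, show ∀ k, 3 + k ≠ 0 by omega, show ∀ k, 3 + k + 1 ≠ 0 by omega, hv]
  ring

theorem exists_update_one_tadEnergy_lt (hp : 1 < p) (hlam : 0 < lam) {v : ℕ → ℝ}
    (hE : tadEnergy 3 (3 + m) p v ≤ lam * tadNorm 3 (3 + m) p v) (hv1 : 0 < v 1)
    (h01 : v 0 = v 1) (h12 : v 1 = v 2) :
    ∃ b, tadNorm 3 (3 + m) p v ≤ tadNorm 3 (3 + m) p (Function.update v 1 b) ∧
      tadEnergy 3 (3 + m) p (Function.update v 1 b)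
        < lam * tadNorm 3 (3 + m) p (Function.update v 1 b) := by
  -- raising `v 1` by `ε` costs `2 ε ^ p` in energy and gains at least `2 δ ε` in `lam * norm`
  set δ := lam * v 1 ^ (p - 1)
  have hδ : 0 < δ := by positivity
  set ε := (δ / 2) ^ (p - 1)⁻¹
  have hε : 0 < ε := by positivity
  have hεδ : ε ^ (p - 1) < δ := by
    rw [Real.rpow_inv_rpow (by positivity) (by linarith)]
    linarith
  have hεp : ε ^ p = ε ^ (p - 1) * ε := by
    rw [Real.rpow_sub_one hε.ne', div_mul_cancel₀ _ hε.ne']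
  have hgain := rpow_sub_one_mul_le_add_rpow_sub_rpow hv1.le hε.le hp.le
  have hE' : tadEnergy 3 (3 + m) p (Function.update v 1 (v 1 + ε))
      = tadEnergy 3 (3 + m) p v + 2 * ε ^ p := by
    rw [tadEnergy_update_one, ← h12, h01, sub_self, abs_zero, Real.zero_rpow (by positivity),
      sub_add_cancel_left, abs_neg, add_sub_cancel_left, abs_of_pos hε]
    ring
  have hN' : tadNorm 3 (3 + m) p (Function.update v 1 (v 1 + ε))
      = tadNorm 3 (3 + m) p v + 2 * ((v 1 + ε) ^ p - v 1 ^ p) := by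
    rw [tadNorm_update_one, abs_of_pos hv1, abs_of_pos (add_pos hv1 hε)]
  refine ⟨v 1 + ε, by linarith [mul_nonneg (Real.rpow_nonneg hv1.le (p - 1)) hε.le], ?_⟩
  have h1 : ε ^ (p - 1) * ε < δ * ε := mul_lt_mul_of_pos_right hεδ hε
  have h2 : lam * (v 1 ^ (p - 1) * ε) ≤ lam * ((v 1 + ε) ^ p - v 1 ^ p) :=
    mul_le_mul_of_nonneg_left hgain hlam.le
  rw [hE', hN', hεp]
  nlinarith

theorem exists_tadEnergy_two_lt (hp : 1 < p)
    (hmin : ∀ v : ℕ → ℝ, v (3 + m) = 0 → 0 < tadNorm 3 (3 + m) p v →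
      lam * tadNorm 3 (3 + m) p v ≤ tadEnergy 3 (3 + m) p v)
    (hw : 0 ≤ w) (hsymm : w 0 = w 2) (hwn : w (3 + m) = 0)
    (hpos : 0 < tadNorm 3 (3 + m) p w)
    (hle : tadEnergy 3 (3 + m) p w ≤ lam * tadNorm 3 (3 + m) p w) :
    ∃ g : ℕ → ℝ, g (3 + m) = 0 ∧ 0 < tadNorm 2 (3 + m) p g ∧
      tadEnergy 2 (3 + m) p g < lam * tadNorm 2 (3 + m) p g := by
  have hp0 : p ≠ 0 := by positivity
  have hlam : 0 < lam := by
    by_contra! h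
    have := tadEnergy_pos hp0 (by omega) hwn hpos
    nlinarith
  set M := rearrange w (3 + m)
  have hM0 : 0 ≤ M := rearrange_nonneg hw
  have hMn : M (3 + m) = 0 := (rearrange_self (by omega)).trans hwn
  have hNM : tadNorm 3 (3 + m) p w ≤ tadNorm 3 (3 + m) p M :=
    tadNorm_le_tadNorm_rearrange (by positivity) hw hsymm 3
  have hMpos : 0 < tadNorm 3 (3 + m) p M := hpos.trans_le hNM
  have hME : tadEnergy 3 (3 + m) p M ≤ lam * tadNorm 3 (3 + m) p M :=
    (tadEnergy_rearrange_le (by positivity) (by omega) hsymm).trans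
      (hle.trans (mul_le_mul_of_nonneg_left hNM hlam.le))
  have hM1 : 0 < M 1 := by
    by_contra! h
    have := tadNorm_eq_zero (c := 3) hp0 (by omega) fun k hk =>
      le_antisymm ((rearrange_le_one (by omega) hk).trans h) (hM0 k)
    linarith
  have h32 : M 3 ≤ M 2 := rearrange_succ_le two_ne_zero (by omega)
  -- if `M` were constant on `0, 1, 2`, raising it at `1` would beat the minimum `lam`
  have h21 : M 2 < M 1 := by
    refine (rearrange_succ_le one_ne_zero (by omega)).lt_of_ne fun h => ?_
    obtain ⟨b, hNb, hEb⟩ :=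
      exists_update_one_tadEnergy_lt hp hlam hME hM1 (rearrange_zero.trans h) h.symm
    have := hmin _ (by rw [Function.update_of_ne (by omega)]; exact hMn) (hMpos.trans_le hNb)
    linarith
  have hgain : 0 < 2 * |M 1| ^ p - |M 2| ^ p - |M 3| ^ p := by
    rw [abs_of_nonneg (hM0 1), abs_of_nonneg (hM0 2), abs_of_nonneg (hM0 3)]
    have := Real.rpow_lt_rpow (hM0 2) h21 (by positivity)
    have := Real.rpow_le_rpow (hM0 3) (h32.trans h21.le) (by positivity)
    linarith
  refine ⟨Function.update M 0 (M 1), by rw [Function.update_of_ne (by omega)]; exact hMn, ?_, ?_⟩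
  · rw [tadNorm_two_update_zero m rearrange_zero]
    linarith
  · rw [tadEnergy_two_update_zero hp0 m rearrange_zero, tadNorm_two_update_zero m rearrange_zero]
    have : 0 ≤ |M 2 - M 3| ^ p := by positivity
    nlinarith

end PathCoordinates

/-- For `n ≥ 5` and `p > 1`, `λ_{1,p}(T_{n,4}) > λ_{1,p}(T_{n,3})`. -/
theorem tadpole_comparison (n : ℕ) (hn : 5 ≤ n) (p : ℝ) (hp : 1 < p) :
    lambda1 (tadpole n 3) p < lambda1 (tadpole n 4) p := by
  obtain ⟨m, rfl⟩ : ∃ m, n = 3 + m + 1 := ⟨n - 4, by omega⟩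
  change lambda1 (tadpole (3 + m + 1) (2 + 1)) p < lambda1 (tadpole (3 + m + 1) (3 + 1)) p
  have hp0 : p ≠ 0 := by positivity
  obtain ⟨w, hw, hsymm, hwn, hpos, hle⟩ := exists_symmetric_tadpole_four hp (by omega : 3 < 3 + m)
  obtain ⟨g, hg, hgpos, hgE⟩ := exists_tadEnergy_two_lt hp
    (fun v hv hN => lambda1_mul_tadNorm_le hp0 (by norm_num) (by omega) hv hN) hw hsymm hwn hpos hle
  exact lt_of_mul_lt_mul_right
    ((lambda1_mul_tadNorm_le hp0 le_rfl (by omega) hg hgpos).trans_lt hgE) hgpos.le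
end

section
/- Let G be a connected finite simple graph with at least one pendant vertex, consisting of n ≥ 4 edges. Then λ_{1,1}(G) ≥ λ_{1,1}(T_{n,3}). -/
attribute [local instance] Classical.propDecidable

open Finset

/-! For `p = 1` the Rayleigh quotient of any admissible `f` on `G` is at least
`1 / (2|E| - 1)`: if `v` is a pendant vertex and `m` maximises `|f|`, telescoping along a path
from `v` to `m` gives `|f m| ≤ ‖df‖₁`, while `f v = 0` gives
`‖f‖₁ ≤ |f m| · (Σ deg - deg v) = |f m| · (2|E| - 1)`.
When `v` is the only pendant vertex, the indicator of `V \ {v}` has energy `deg v = 1` and norm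
`2|E| - 1`, so it attains the bound. The tadpole `T_{n,3}` has `n` edges and the single pendant
vertex `t_n`, whence `λ_{1,1}(T_{n,3}) ≤ 1 / (2n - 1) ≤ λ_{1,1}(G)`. -/

namespace SimpleGraph

variable {V : Type*} [Fintype V] (G : SimpleGraph V)

lemma sum_dart_edge {M : Type*} [AddCommMonoid M] (h : Sym2 V → M) :
    ∑ d : G.Dart, h d.edge = 2 • ∑ e ∈ G.edgeFinset, h e := by
  rw [← sum_fiberwise_of_maps_to (g := Dart.edge) (t := G.edgeFinset) (by simp), smul_sum]
  refine sum_congr rfl fun e he => ?_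
  rw [sum_congr rfl fun d hd => congrArg h (mem_filter.1 hd).2, sum_const,
    G.dart_edge_fiber_card e (mem_edgeFinset.1 he)]

lemma sum_adj_eq_sum_dart {M : Type*} [AddCommMonoid M] (g : V → V → M) :
    ∑ x, ∑ y, (if G.Adj x y then g x y else 0) = ∑ d : G.Dart, g d.fst d.snd := by
  rw [← sum_product', ← sum_filter]
  exact sum_bij' (fun p hp => ⟨p, (mem_filter.1 hp).2⟩) (fun d _ => d.toProd)
    (by simp) (by simp) (by simp) (by simp) (by simp)

end SimpleGraph

open SimpleGraph

section AbsDiff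

variable {V : Type*} {G : SimpleGraph V}

noncomputable def absDiff (f : V → ℝ) : Sym2 V → ℝ :=
  Sym2.lift ⟨fun x y => |f x - f y|, fun _ _ => abs_sub_comm _ _⟩

@[simp] lemma absDiff_mk (f : V → ℝ) (x y : V) : absDiff f s(x, y) = |f x - f y| := rfl

lemma absDiff_nonneg (f : V → ℝ) (e : Sym2 V) : 0 ≤ absDiff f e :=
  e.ind fun _ _ => abs_nonneg _

lemma abs_sub_le_sum_absDiff_edges (f : V → ℝ) {a b : V} (w : G.Walk a b) :
    |f a - f b| ≤ (w.edges.map (absDiff f)).sum := by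
  induction w with
  | nil => simp
  | cons _ _ ih =>
    rw [Walk.edges_cons, List.map_cons, List.sum_cons, absDiff_mk]
    exact (abs_sub_le _ _ _).trans (add_le_add le_rfl ih)

end AbsDiff

section Rayleigh

variable {V : Type*} [Fintype V] (G : SimpleGraph V)

lemma deg_eq_degree (x : V) : deg G x = G.degree x := by
  rw [deg, ← card_neighborFinset_eq_degree, neighborFinset_eq_filter]

lemma exists_adj_of_deg_eq_one {v : V} (hv : deg G v = 1) : ∃ w, G.Adj v w :=
  (degree_pos_iff_exists_adj G v).1 (deg_eq_degree G v ▸ hv ▸ Nat.one_pos)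

lemma sum_deg_eq_twice_card_edges : ∑ x, deg G x = 2 * #G.edgeFinset := by
  simp only [deg_eq_degree, sum_degrees_eq_twice_card_edges]

lemma energy_one_eq_sum_edgeFinset (f : V → ℝ) :
    energy G 1 f = ∑ e ∈ G.edgeFinset, absDiff f e := by
  simp only [energy, Real.rpow_one]
  rw [G.sum_adj_eq_sum_dart fun x y => |f x - f y|]
  have := G.sum_dart_edge (absDiff f)
  simp only [Dart.edge, absDiff_mk, nsmul_eq_mul, Nat.cast_ofNat] at this
  rw [this]
  ring

lemma rayleigh_nonneg (p : ℝ) (f : V → ℝ) : 0 ≤ rayleigh G p f := by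
  unfold rayleigh energy pnorm
  have := fun x y => Real.rpow_nonneg (abs_nonneg (f x - f y)) p
  have := fun x => Real.rpow_nonneg (abs_nonneg (f x)) p
  positivity

lemma pnorm_one_eq (f : V → ℝ) : pnorm G 1 f = ∑ x, |f x| * deg G x := by
  simp only [pnorm, Real.rpow_one]

lemma pnorm_one_le {f : V → ℝ} {v m : V} (hv : f v = 0)
    (hm : ∀ x, |f x| ≤ |f m|) : pnorm G 1 f ≤ (2 * #G.edgeFinset - deg G v) * |f m| := by
  have hvol : ∑ x ∈ univ.erase v, (deg G x : ℝ) = 2 * #G.edgeFinset - deg G v := by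
    rw [eq_sub_iff_add_eq, sum_erase_add _ _ (mem_univ v)]
    exact_mod_cast sum_deg_eq_twice_card_edges G
  calc pnorm G 1 f = ∑ x ∈ univ.erase v, |f x| * deg G x := by
        rw [pnorm_one_eq, ← add_sum_erase _ _ (mem_univ v), hv, abs_zero, zero_mul, zero_add]
    _ ≤ ∑ x ∈ univ.erase v, |f m| * deg G x :=
        sum_le_sum fun x _ => mul_le_mul_of_nonneg_right (hm x) (Nat.cast_nonneg _)
    _ = _ := by rw [← mul_sum, hvol, mul_comm]

lemma energy_one_indicator_ne (v : V) :
    energy G 1 (fun x => if x = v then 0 else 1) = deg G v := by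
  have hedge : ∀ e ∈ G.edgeFinset,
      absDiff (fun x => if x = v then (0 : ℝ) else 1) e = if v ∈ e then 1 else 0 := by
    intro e he
    induction e with
    | _ a b =>
      have hab : a ≠ b := G.ne_of_adj (mem_edgeFinset.1 he)
      by_cases ha : a = v <;> by_cases hb : b = v <;> simp_all [eq_comm]
  rw [energy_one_eq_sum_edgeFinset, sum_congr rfl hedge, sum_boole, ← incidenceFinset_eq_filter,
    card_incidenceFinset_eq_degree, deg_eq_degree]

lemma pnorm_one_indicator_ne (v : V) :
    pnorm G 1 (fun x => if x = v then 0 else 1) = 2 * #G.edgeFinset - deg G v := by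
  have hterm : ∀ x ∈ univ.erase v, |if x = v then (0 : ℝ) else 1| * deg G x = deg G x := by
    intro x hx
    simp [(mem_erase.1 hx).1]
  rw [pnorm_one_eq, eq_sub_iff_add_eq, ← sum_erase_add _ _ (mem_univ v), sum_congr rfl hterm,
    if_pos rfl, abs_zero, zero_mul, add_zero, sum_erase_add _ _ (mem_univ v)]
  exact_mod_cast sum_deg_eq_twice_card_edges G

end Rayleigh

section Bounds

variable {V : Type*} [Fintype V] {G : SimpleGraph V}

lemma abs_sub_le_energy_one (hconn : G.Connected) (f : V → ℝ) (a b : V) :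
    |f a - f b| ≤ energy G 1 f := by
  obtain ⟨p, hp⟩ := (hconn a b).some.toPath
  calc |f a - f b| ≤ (p.edges.map (absDiff f)).sum := abs_sub_le_sum_absDiff_edges f p
    _ = ∑ e ∈ p.edges.toFinset, absDiff f e := (List.sum_toFinset _ hp.isTrail.edges_nodup).symm
    _ ≤ ∑ e ∈ G.edgeFinset, absDiff f e :=
      sum_le_sum_of_subset_of_nonneg
        (fun e he => mem_edgeFinset.2 (p.edges_subset_edgeSet (List.mem_toFinset.1 he)))
        (fun e _ _ => absDiff_nonneg f e)
    _ = energy G 1 f := (energy_one_eq_sum_edgeFinset G f).symm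

lemma pnorm_one_pos (hdeg : ∀ x, 0 < deg G x) {f : V → ℝ} (hf : f ≠ 0) :
    0 < pnorm G 1 f := by
  obtain ⟨z, hz⟩ := Function.ne_iff.1 hf
  rw [pnorm_one_eq]
  exact sum_pos' (fun x _ => by positivity)
    ⟨z, mem_univ z, mul_pos (abs_pos.2 hz) (Nat.cast_pos.2 (hdeg z))⟩

lemma exists_deg_ne_one (hconn : G.Connected) (hE : 2 ≤ #G.edgeFinset) :
    ∃ z, deg G z ≠ 1 := by
  by_contra! hall
  have hV : Fintype.card V = 2 * #G.edgeFinset := by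
    rw [← sum_deg_eq_twice_card_edges G, sum_congr rfl fun x _ => hall x, sum_const,
      smul_eq_mul, mul_one, card_univ]
  have := hconn.card_vert_le_card_edgeSet_add_one
  rw [Nat.card_eq_fintype_card, Nat.card_eq_fintype_card, ← edgeFinset_card] at this
  omega

lemma one_div_le_rayleigh_one (hconn : G.Connected) {v : V} (hv : deg G v = 1)
    {f : V → ℝ} (hf : ∀ x, deg G x = 1 → f x = 0) (hf0 : f ≠ 0) :
    1 / (2 * #G.edgeFinset - 1) ≤ rayleigh G 1 f := by
  have : Nonempty V := ⟨v⟩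
  obtain ⟨m, hm⟩ : ∃ m, ∀ x, |f x| ≤ |f m| := Finite.exists_max fun x => |f x|
  obtain ⟨w, hvw⟩ := exists_adj_of_deg_eq_one G hv
  have hdeg : ∀ x, 0 < deg G x := by
    have : Nontrivial V := ⟨v, w, hvw.ne⟩
    exact fun x => deg_eq_degree G x ▸ hconn.preconnected.degree_pos_of_nontrivial x
  have hP := pnorm_one_pos hdeg hf0
  have hE : |f m| ≤ energy G 1 f := by
    simpa [hf v hv] using abs_sub_le_energy_one hconn f v m
  have hPle := pnorm_one_le G (hf v hv) hm
  rw [hv, Nat.cast_one] at hPle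
  have hEdges : (1 : ℝ) ≤ #G.edgeFinset :=
    Nat.one_le_cast.2 (card_pos.2 ⟨s(v, w), mem_edgeFinset.2 hvw⟩)
  rw [rayleigh, div_le_div_iff₀ (by linarith) hP]
  nlinarith

lemma one_div_le_lambda1_one (hconn : G.Connected) {v : V} (hv : deg G v = 1)
    (hE : 2 ≤ #G.edgeFinset) : 1 / (2 * #G.edgeFinset - 1) ≤ lambda1 G 1 := by
  -- without an interior vertex the admissible set would be empty, and `sInf ∅ = 0`
  obtain ⟨z, hz⟩ := exists_deg_ne_one hconn hE
  refine le_csInf ⟨_, Pi.single z 1, fun x hx => ?_, ?_, rfl⟩ ?_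
  · exact Pi.single_eq_of_ne (by rintro rfl; exact hz hx) 1
  · exact Pi.single_ne_zero_iff.2 one_ne_zero
  · rintro r ⟨f, hf, hf0, rfl⟩
    exact one_div_le_rayleigh_one hconn hv hf hf0

lemma lambda1_one_le_of_unique_pendant {v : V} (hv : deg G v = 1)
    (huniq : ∀ x, deg G x = 1 → x = v) : lambda1 G 1 ≤ 1 / (2 * #G.edgeFinset - 1) := by
  have hf0 : (fun x => if x = v then (0 : ℝ) else 1) ≠ 0 := by
    obtain ⟨w, hvw⟩ := exists_adj_of_deg_eq_one G hv
    exact Function.ne_iff.2 ⟨w, by simp [hvw.ne.symm]⟩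
  have hR : rayleigh G 1 (fun x => if x = v then 0 else 1) = 1 / (2 * #G.edgeFinset - 1) := by
    rw [rayleigh, energy_one_indicator_ne, pnorm_one_indicator_ne, hv, Nat.cast_one]
  refine csInf_le ⟨0, ?_⟩ ⟨_, fun x hx => if_pos (huniq x hx), hf0, hR.symm⟩
  rintro r ⟨f, -, -, rfl⟩
  exact rayleigh_nonneg G 1 f

end Bounds

section Tadpole

variable {n : ℕ}

lemma tadpole_three_adj {x y : Fin n} :
    (tadpole n 3).Adj x y ↔ y.val = x.val + 1 ∨ x.val = y.val + 1 ∨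
      (x.val = 0 ∧ y.val = 2) ∨ (x.val = 2 ∧ y.val = 0) := by
  simp only [tadpole, fromRel_adj, ne_eq, Fin.ext_iff]
  omega

lemma deg_tadpole_three (hn : 4 ≤ n) (x : Fin n) :
    deg (tadpole n 3) x = if x.val = n - 1 then 1 else if x.val = 2 then 3 else 2 := by
  have hx := x.isLt
  have hdeg (s : Finset (Fin n)) (hs : ∀ y, (tadpole n 3).Adj x y ↔ y ∈ s) :
      deg (tadpole n 3) x = #s :=
    congrArg card (by ext y; simp [hs])
  rcases (by omega : x.val = n - 1 ∨ x.val = 0 ∨ x.val = 2 ∨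
    (x.val ≠ 0 ∧ x.val ≠ 2 ∧ x.val < n - 1)) with h | h | h | h
  · rw [hdeg {⟨n - 2, by omega⟩} fun y => by
      simp only [tadpole_three_adj, mem_singleton, Fin.ext_iff]; omega]
    rw [card_singleton, if_pos h]
  · rw [hdeg {⟨1, by omega⟩, ⟨2, by omega⟩} fun y => by
      simp only [tadpole_three_adj, mem_insert, mem_singleton, Fin.ext_iff]; omega]
    rw [card_pair (by simp [Fin.ext_iff])]
    split_ifs <;> omega
  · rw [hdeg {⟨0, by omega⟩, ⟨1, by omega⟩, ⟨3, by omega⟩} fun y => by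
      simp only [tadpole_three_adj, mem_insert, mem_singleton, Fin.ext_iff]; omega]
    rw [card_insert_of_notMem (by simp [Fin.ext_iff]), card_pair (by simp [Fin.ext_iff])]
    split_ifs <;> omega
  · rw [hdeg {⟨x.val - 1, by omega⟩, ⟨x.val + 1, by omega⟩} fun y => by
      simp only [tadpole_three_adj, mem_insert, mem_singleton, Fin.ext_iff]; omega]
    rw [card_pair (by simp [Fin.ext_iff])]
    split_ifs <;> omega

lemma eq_last_of_deg_tadpole_three_eq_one (hn : 4 ≤ n) {x : Fin n}
    (hx : deg (tadpole n 3) x = 1) : x = ⟨n - 1, by omega⟩ := by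
  rw [deg_tadpole_three hn] at hx
  ext
  split_ifs at hx <;> omega

lemma card_edgeFinset_tadpole_three (hn : 4 ≤ n) : #(tadpole n 3).edgeFinset = n := by
  have hsum : ∀ k < n, ∑ x : Fin n, (if x.val = k then 1 else 0) = 1 := fun k hk => by
    rw [Fin.sum_univ_eq_sum_range (fun i => if i = k then 1 else 0), sum_ite_eq',
      if_pos (mem_range.2 hk)]
  have hterm (x : Fin n) : deg (tadpole n 3) x + (if x.val = n - 1 then 1 else 0) =
      2 + if x.val = 2 then 1 else 0 := by
    rw [deg_tadpole_three hn]
    split_ifs <;> omega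
  have := sum_congr (s₁ := univ) rfl fun x _ => hterm x
  rw [sum_add_distrib, sum_add_distrib, sum_deg_eq_twice_card_edges, hsum (n - 1) (by omega),
    hsum 2 (by omega), sum_const, card_univ, Fintype.card_fin, smul_eq_mul] at this
  omega

end Tadpole

/-- Faber–Krahn inequality for `p = 1`: for any connected finite simple graph `G` with at
least one pendant vertex and `n ≥ 4` edges, `λ_{1,1}(G) ≥ λ_{1,1}(T_{n,3})`. -/
theorem faber_krahn_one {V : Type*} [Fintype V] (G : SimpleGraph V)
    (hconn : G.Connected) (hpend : ∃ x : V, deg G x = 1)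
    (n : ℕ) (hn : 4 ≤ n) (hedges : G.edgeFinset.card = n) :
    lambda1 (tadpole n 3) 1 ≤ lambda1 G 1 := by
  obtain ⟨v, hv⟩ := hpend
  have hlast : deg (tadpole n 3) ⟨n - 1, by omega⟩ = 1 := by
    rw [deg_tadpole_three hn, if_pos rfl]
  calc lambda1 (tadpole n 3) 1 ≤ 1 / (2 * #(tadpole n 3).edgeFinset - 1) :=
        lambda1_one_le_of_unique_pendant hlast fun x => eq_last_of_deg_tadpole_three_eq_one hn
    _ = 1 / (2 * #G.edgeFinset - 1) := by rw [card_edgeFinset_tadpole_three hn, hedges]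
    _ ≤ lambda1 G 1 := one_div_le_lambda1_one hconn hv (by omega)
end
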